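/- arXiv:2109.10833 — 2 statements merged into one kernel-verified Lean document; each statement's English description precedes it below -/
import Mathlib

section
/- For the depth-1 QAOA on a (D+1)-regular triangle-free Max 3XOR instance with expectation f(β,γ) = (1/2)·sin(γ)·sin(2β)·(3·cos²(2β)·cos^D(γ) - sin²(2β)·cos^{3D}(γ)), maximizing over β at fixed γ gives sin²(2β) = 1/(cos^{2D}(γ) + 3), and the resulting maximum value equals sin(γ)·cos^D(γ)/√(cos^{2D}(γ) + 3). -/
open Real

/-
Writing u = sin 2β and using cos² 2β = 1 - u², the objective is
(1/2) sin γ cos^D γ · (3u - k u³) with k = cos^{2D} γ + 3 ∈ (3, 4].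
At s = 1/√k one has 3s - k s³ - (3u - k u³) = k (s - u)² (2s + u), which is nonnegative
for u ≥ -1 because s ≥ 1/2; the maximal value of the cubic is 3s - k s³ = 2s.
-/

noncomputable def qaoaObjective (D : ℕ) (γ β : ℝ) : ℝ :=
  (1 / 2 : ℝ) * sin γ * sin (2 * β) *
    (3 * cos (2 * β) ^ 2 * cos γ ^ D - sin (2 * β) ^ 2 * cos γ ^ (3 * D))

lemma qaoaObjective_eq_cubic (D : ℕ) (γ β : ℝ) :
    qaoaObjective D γ β = 1 / 2 * (sin γ * cos γ ^ D) *
      (3 * sin (2 * β) - (cos γ ^ (2 * D) + 3) * sin (2 * β) ^ 3) := by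
  have h3D : cos γ ^ (3 * D) = cos γ ^ D * cos γ ^ (2 * D) := by
    rw [← pow_add]; ring_nf
  rw [qaoaObjective, cos_sq', h3D]
  ring

lemma cubic_sub_cubic_eq {k s u : ℝ} (hsk : s ^ 2 * k = 1) :
    3 * s - k * s ^ 3 - (3 * u - k * u ^ 3) = k * (s - u) ^ 2 * (2 * s + u) := by
  linear_combination (-3 * (s - u)) * hsk

lemma cubic_le_of_sq_mul_eq_one {k s u : ℝ} (hk : k ≤ 4) (hs : 0 ≤ s) (hsk : s ^ 2 * k = 1)
    (hu : -1 ≤ u) : 3 * u - k * u ^ 3 ≤ 3 * s - k * s ^ 3 := by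
  have hk0 : 0 < k := by
    by_contra! h
    nlinarith [sq_nonneg s]
  have hs_half : 1 / 2 ≤ s := by nlinarith
  have hgap := cubic_sub_cubic_eq (u := u) hsk
  have : 0 ≤ k * (s - u) ^ 2 * (2 * s + u) := by
    have : 0 ≤ 2 * s + u := by linarith
    positivity
  linarith

lemma cubic_eq_two_mul_of_sq_mul_eq_one {k s : ℝ} (hsk : s ^ 2 * k = 1) :
    3 * s - k * s ^ 3 = 2 * s := by
  linear_combination (-s) * hsk

theorem stmt_4_general (D : ℕ) (γ : ℝ) (hγ : γ ∈ Set.Ioo 0 (π / 2)) (β : ℝ)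
    (hopt : Real.sin (2 * β) = Real.sqrt (1 / ((Real.cos γ) ^ (2 * D) + 3))) :
    (Real.sin (2 * β)) ^ 2 = 1 / ((Real.cos γ) ^ (2 * D) + 3) ∧
    (∀ β' : ℝ,
        (1 / 2 : ℝ) * Real.sin γ * Real.sin (2 * β') *
            (3 * (Real.cos (2 * β')) ^ 2 * (Real.cos γ) ^ D
              - (Real.sin (2 * β')) ^ 2 * (Real.cos γ) ^ (3 * D))
          ≤ (1 / 2 : ℝ) * Real.sin γ * Real.sin (2 * β) *
              (3 * (Real.cos (2 * β)) ^ 2 * (Real.cos γ) ^ D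
                - (Real.sin (2 * β)) ^ 2 * (Real.cos γ) ^ (3 * D))) ∧
    (1 / 2 : ℝ) * Real.sin γ * Real.sin (2 * β) *
        (3 * (Real.cos (2 * β)) ^ 2 * (Real.cos γ) ^ D
          - (Real.sin (2 * β)) ^ 2 * (Real.cos γ) ^ (3 * D))
      = Real.sin γ * (Real.cos γ) ^ D / Real.sqrt ((Real.cos γ) ^ (2 * D) + 3) := by
  obtain ⟨hγ0, hγ1⟩ := hγ
  set k := cos γ ^ (2 * D) + 3
  have hc2 : 0 ≤ cos γ ^ (2 * D) ∧ cos γ ^ (2 * D) ≤ 1 := by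
    rw [pow_mul]
    exact ⟨by positivity, pow_le_one₀ (sq_nonneg _) (cos_sq_le_one γ)⟩
  have hk4 : k ≤ 4 := by linarith
  have hs2 : sin (2 * β) ^ 2 = 1 / k := by rw [hopt, sq_sqrt]; exact div_nonneg zero_le_one (by linarith)
  have hsk : sin (2 * β) ^ 2 * k = 1 := by rw [hs2]; field_simp [show k ≠ 0 by linarith]
  have hweight : 0 ≤ 1 / 2 * (sin γ * cos γ ^ D) := by
    have := sin_pos_of_pos_of_lt_pi hγ0 (by linarith [pi_pos])
    have := cos_pos_of_mem_Ioo ⟨by linarith, hγ1⟩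
    positivity
  refine ⟨hs2, fun β' => ?_, ?_⟩
  · change qaoaObjective D γ β' ≤ qaoaObjective D γ β
    rw [qaoaObjective_eq_cubic, qaoaObjective_eq_cubic]
    exact mul_le_mul_of_nonneg_left
      (cubic_le_of_sq_mul_eq_one hk4 (hopt ▸ sqrt_nonneg _) hsk (neg_one_le_sin _)) hweight
  · change qaoaObjective D γ β = _
    rw [qaoaObjective_eq_cubic, cubic_eq_two_mul_of_sq_mul_eq_one hsk, hopt, one_div k,
      sqrt_inv]
    ring

theorem stmt_4 (D : ℕ) (hD : 1 ≤ D) (γ : ℝ) (hγ : γ ∈ Set.Ioo 0 (π / 2)) (β : ℝ)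
    (hβ : β ∈ Set.Ioo (0 : ℝ) π)
    (hopt : Real.sin (2 * β) = Real.sqrt (1 / ((Real.cos γ) ^ (2 * D) + 3))) :
    (Real.sin (2 * β)) ^ 2 = 1 / ((Real.cos γ) ^ (2 * D) + 3) ∧
    (∀ β' : ℝ,
        (1 / 2 : ℝ) * Real.sin γ * Real.sin (2 * β') *
            (3 * (Real.cos (2 * β')) ^ 2 * (Real.cos γ) ^ D
              - (Real.sin (2 * β')) ^ 2 * (Real.cos γ) ^ (3 * D))
          ≤ (1 / 2 : ℝ) * Real.sin γ * Real.sin (2 * β) *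
              (3 * (Real.cos (2 * β)) ^ 2 * (Real.cos γ) ^ D
                - (Real.sin (2 * β)) ^ 2 * (Real.cos γ) ^ (3 * D))) ∧
    (1 / 2 : ℝ) * Real.sin γ * Real.sin (2 * β) *
        (3 * (Real.cos (2 * β)) ^ 2 * (Real.cos γ) ^ D
          - (Real.sin (2 * β)) ^ 2 * (Real.cos γ) ^ (3 * D))
      = Real.sin γ * (Real.cos γ) ^ D / Real.sqrt ((Real.cos γ) ^ (2 * D) + 3) :=
  stmt_4_general D γ hγ β hopt
end

section
/- The function t ↦ t/√(1 + 3·e^{t²}) on (0, ∞) attains its maximum at the unique t > 0 satisfying e^{-t²} = 3(t² - 1), and this maximizer t₀ satisfies 1.05 < t₀ < 1.06, with maximum value between 0.331 and 0.332. -/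
/-!
Writing `E = exp t²`, the derivative of `t / √(1 + 3E)` is `(1 - 3 (t² - 1) E) / (1 + 3E)^{3/2}`.
Its numerator has derivative `-6 t³ E`, so it decreases strictly on `t ≥ 0` from `4` to `-∞`:
the function increases up to the unique zero `t₀` of the numerator and decreases after it.
That zero equation is `e^{-t²} = 3 (t² - 1)`, and it turns `1 + 3E` into `t² / (t² - 1)`,
so the maximum value is `√(t₀² - 1)`. Both numerical claims then follow from locating `t₀`
in `(1.0535, 1.0536)` with truncated exponential series.
-/

open Real Set

lemma isMaxOn_of_deriv_pos_of_deriv_neg {f : ℝ → ℝ} {a c : ℝ} (hf : Continuous f)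
    (hpos : ∀ x ∈ Ioo a c, 0 < deriv f x) (hneg : ∀ x ∈ Ioi c, deriv f x < 0) :
    IsMaxOn f (Ioi a) c := by
  have hmono : MonotoneOn f (Icc a c) :=
    (strictMonoOn_of_deriv_pos (convex_Icc a c) hf.continuousOn
      (by rwa [interior_Icc])).monotoneOn
  have hanti : AntitoneOn f (Ici c) :=
    (strictAntiOn_of_deriv_neg (convex_Ici c) hf.continuousOn
      (by rwa [interior_Ici])).antitoneOn
  intro t (ht : a < t)
  rcases le_total t c with htc | hct
  · exact hmono ⟨ht.le, htc⟩ ⟨ht.le.trans htc, le_rfl⟩ htc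
  · exact hanti (mem_Ici.2 le_rfl) (mem_Ici.2 hct) hct

noncomputable def advantage (t : ℝ) : ℝ := t / √(1 + 3 * exp (t ^ 2))

noncomputable def derivNumerator (t : ℝ) : ℝ := 1 - 3 * (t ^ 2 - 1) * exp (t ^ 2)

lemma hasDerivAt_advantage (t : ℝ) :
    HasDerivAt advantage (derivNumerator t / ((1 + 3 * exp (t ^ 2)) * √(1 + 3 * exp (t ^ 2)))) t := by
  have hu : 0 < 1 + 3 * exp (t ^ 2) := by positivity
  have hsq : HasDerivAt (fun t : ℝ => t ^ 2) (2 * t) t := by simpa using hasDerivAt_pow 2 t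
  have hsqrt := ((hsq.exp.const_mul 3).const_add 1).sqrt hu.ne'
  refine ((hasDerivAt_id t).div hsqrt (sqrt_pos.2 hu).ne').congr_deriv ?_
  have hss : √(1 + 3 * exp (t ^ 2)) ^ 2 = 1 + 3 * exp (t ^ 2) := sq_sqrt hu.le
  rw [derivNumerator, hss, id]
  field_simp
  linear_combination hss

lemma hasDerivAt_derivNumerator (t : ℝ) : HasDerivAt derivNumerator (-(6 * t ^ 3 * exp (t ^ 2))) t := by
  have hsq : HasDerivAt (fun t : ℝ => t ^ 2) (2 * t) t := by simpa using hasDerivAt_pow 2 t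
  exact ((((hsq.sub_const 1).const_mul 3).mul hsq.exp).const_sub 1).congr_deriv (by ring)

lemma strictAntiOn_derivNumerator : StrictAntiOn derivNumerator (Ici 0) := by
  refine strictAntiOn_of_deriv_neg (convex_Ici 0)
    (fun t _ => (hasDerivAt_derivNumerator t).continuousAt.continuousWithinAt) fun t ht => ?_
  rw [interior_Ici, mem_Ioi] at ht
  rw [(hasDerivAt_derivNumerator t).deriv, neg_lt_zero]
  positivity

lemma derivNumerator_eq_zero_iff (t : ℝ) : derivNumerator t = 0 ↔ exp (-(t ^ 2)) = 3 * (t ^ 2 - 1) := by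
  rw [derivNumerator, exp_neg, sub_eq_zero, eq_comm, mul_eq_one_iff_eq_inv₀ (exp_pos _).ne']
  exact eq_comm

lemma advantage_eq_sqrt_of_derivNumerator_eq_zero {t : ℝ} (ht : 0 < t) (h : derivNumerator t = 0) :
    advantage t = √(t ^ 2 - 1) := by
  have hE : 3 * (t ^ 2 - 1) * exp (t ^ 2) = 1 := by unfold derivNumerator at h; linarith
  have ht1 : 0 < t ^ 2 - 1 := by
    by_contra! hle
    nlinarith [exp_pos (t ^ 2)]
  have hu : 1 + 3 * exp (t ^ 2) = t ^ 2 / (t ^ 2 - 1) := by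
    rw [eq_div_iff ht1.ne']
    linear_combination hE
  rw [advantage, hu, sqrt_div' _ ht1.le, sqrt_sq ht.le, div_div_eq_mul_div,
    mul_div_cancel_left₀ _ ht.ne']

lemma derivNumerator_pos_at_1_0535 : 0 < derivNumerator 1.0535 := by
  have hexp_small : exp 0.10986225 < 1.11613 := by
    refine (exp_bound' (by norm_num) (by norm_num) (by norm_num : 0 < 4)).trans_lt ?_
    simp only [Finset.sum_range_succ, Finset.sum_range_zero]
    norm_num [Nat.factorial]
  have hexp : exp 1.10986225 < 3.034 := by
    rw [show (1.10986225 : ℝ) = 1 + 0.10986225 by norm_num, exp_add]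
    nlinarith [exp_one_lt_d9, exp_pos 1, exp_pos 0.10986225]
  rw [derivNumerator, show (1.0535 : ℝ) ^ 2 = 1.10986225 by norm_num]
  linarith

lemma derivNumerator_neg_at_1_0536 : derivNumerator 1.0536 < 0 := by
  have hexp : 3.0315 < exp 1.11007296 := by
    refine lt_of_lt_of_le ?_ (sum_le_exp_of_nonneg (by norm_num) 6)
    simp only [Finset.sum_range_succ, Finset.sum_range_zero]
    norm_num [Nat.factorial]
  rw [derivNumerator, show (1.0536 : ℝ) ^ 2 = 1.11007296 by norm_num]
  linarith

lemma exists_derivNumerator_eq_zero : ∃ t ∈ Ioo (1.0535 : ℝ) 1.0536, derivNumerator t = 0 :=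
  intermediate_value_Ioo' (by norm_num)
    (fun t _ => (hasDerivAt_derivNumerator t).continuousAt.continuousWithinAt)
    ⟨derivNumerator_neg_at_1_0536, derivNumerator_pos_at_1_0535⟩

lemma isMaxOn_advantage {t₀ : ℝ} (ht₀ : 0 < t₀) (h : derivNumerator t₀ = 0) :
    IsMaxOn advantage (Ioi 0) t₀ := by
  have hderiv (t : ℝ) : deriv advantage t =
      derivNumerator t / ((1 + 3 * exp (t ^ 2)) * √(1 + 3 * exp (t ^ 2))) :=
    (hasDerivAt_advantage t).deriv
  have hden (t : ℝ) : 0 < (1 + 3 * exp (t ^ 2)) * √(1 + 3 * exp (t ^ 2)) := by positivity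
  refine isMaxOn_of_deriv_pos_of_deriv_neg
    (continuous_iff_continuousAt.2 fun t => (hasDerivAt_advantage t).continuousAt)
    (fun t ht => ?_) (fun t ht => ?_)
  · rw [hderiv]
    refine div_pos ?_ (hden t)
    rw [← h]
    exact strictAntiOn_derivNumerator (mem_Ici.2 ht.1.le) (mem_Ici.2 ht₀.le) ht.2
  · rw [hderiv]
    refine div_neg_of_neg_of_pos ?_ (hden t)
    rw [← h]
    exact strictAntiOn_derivNumerator (mem_Ici.2 ht₀.le) (mem_Ici.2 (ht₀.trans ht).le) ht

theorem stmt_5 :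
    ∃ t₀ : ℝ, 0 < t₀ ∧
      Real.exp (-(t₀ ^ 2)) = 3 * (t₀ ^ 2 - 1) ∧
      (∀ t : ℝ, 0 < t → Real.exp (-(t ^ 2)) = 3 * (t ^ 2 - 1) → t = t₀) ∧
      IsMaxOn (fun t : ℝ => t / Real.sqrt (1 + 3 * Real.exp (t ^ 2))) (Set.Ioi 0) t₀ ∧
      1.05 < t₀ ∧ t₀ < 1.06 ∧
      0.331 < t₀ / Real.sqrt (1 + 3 * Real.exp (t₀ ^ 2)) ∧
      t₀ / Real.sqrt (1 + 3 * Real.exp (t₀ ^ 2)) < 0.332 := by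
  obtain ⟨t₀, ⟨hlo, hhi⟩, hzero⟩ := exists_derivNumerator_eq_zero
  have ht₀ : 0 < t₀ := by linarith
  have hval : advantage t₀ = √(t₀ ^ 2 - 1) := advantage_eq_sqrt_of_derivNumerator_eq_zero ht₀ hzero
  refine ⟨t₀, ht₀, (derivNumerator_eq_zero_iff t₀).1 hzero, fun t ht hcrit => ?_,
    isMaxOn_advantage ht₀ hzero, by linarith, by linarith, ?_, ?_⟩
  · exact strictAntiOn_derivNumerator.injOn (mem_Ici.2 ht.le) (mem_Ici.2 ht₀.le)
      (((derivNumerator_eq_zero_iff t).2 hcrit).trans hzero.symm)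
  · change 0.331 < advantage t₀
    rw [hval, lt_sqrt (by norm_num)]
    nlinarith
  · change advantage t₀ < 0.332
    rw [hval, sqrt_lt' (by norm_num)]
    nlinarith
end
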